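/- Let u be a unit vector in ℝ^2, P > 0 a real number, and Σ a 2×2 real symmetric positive semidefinite matrix with ‖Σ‖_F < P/2. Let u⊥ be a unit vector orthogonal to u and p̃ = (u⊥)ᵀ Σ u the off-diagonal entry of Σ in the basis (u, u⊥). Then the top eigenvector v of M = P·u uᵀ + Σ (suitably sign-normalized) satisfies ‖v − u‖₂ ≤ 2|p̃| / (P − 2‖Σ‖_F). -/

import Mathlib

/-!
Write `v = a u + b u⊥` with `a² + b² = 1` and `a ≥ 0`. Pairing `M v = λ v` with `u⊥` kills the
signal term and leaves `b (λ - q) = a p̃`, where `q = u⊥ᵀ Σ u⊥ ≤ ‖Σ‖_F`. Since `λ` is at least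
the mean eigenvalue `tr M / 2 ≥ P / 2`, we get `λ - q ≥ (P - 2‖Σ‖_F) / 2 > 0`. Finally
`‖v - u‖² = 2 - 2a`, and `(2 - 2a)(1 + a) = 2b²` together with `2a² ≤ 1 + a` gives
`2 - 2a ≤ (p̃ / (λ - q))²`.
-/

open Matrix

theorem Matrix.IsHermitian.trace_le_card_mul_iSup_eigenvalues {n : Type*} [Fintype n]
    [DecidableEq n] {A : Matrix n n ℝ} (hA : A.IsHermitian) :
    A.trace ≤ Fintype.card n * ⨆ i, hA.eigenvalues i := by
  rw [hA.trace_eq_sum_eigenvalues, ← nsmul_eq_mul]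
  simp only [RCLike.ofReal_real_eq_id, id]
  exact Finset.sum_le_card_nsmul _ _ _ fun i _ => le_ciSup (Set.finite_range _).bddAbove i

theorem Matrix.dotProduct_mulVec_le_sqrt_sum_sq_mul {n : Type*} [Fintype n]
    (S : Matrix n n ℝ) (x : n → ℝ) :
    x ⬝ᵥ S *ᵥ x ≤ √(∑ i, ∑ j, |S i j| ^ 2) * (x ⬝ᵥ x) := by
  have hx : √(∑ i, ∑ j, (x i * x j) ^ 2) = x ⬝ᵥ x := by
    simp_rw [mul_pow, ← Finset.mul_sum, ← Finset.sum_mul, ← sq, dotProduct, ← sq]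
    exact Real.sqrt_sq (Finset.sum_nonneg fun i _ => sq_nonneg (x i))
  calc x ⬝ᵥ S *ᵥ x = ∑ ij : n × n, S ij.1 ij.2 * (x ij.1 * x ij.2) := by
        simp only [dotProduct, mulVec, Finset.mul_sum, Fintype.sum_prod_type]
        exact Finset.sum_congr rfl fun i _ => Finset.sum_congr rfl fun j _ => by ring
    _ ≤ √(∑ ij : n × n, S ij.1 ij.2 ^ 2) * √(∑ ij : n × n, (x ij.1 * x ij.2) ^ 2) :=
        Real.sum_mul_le_sqrt_mul_sqrt _ _ _
    _ = √(∑ i, ∑ j, |S i j| ^ 2) * (x ⬝ᵥ x) := by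
        simp only [Fintype.sum_prod_type, sq_abs, hx]

theorem Matrix.sum_sub_sq_eq_dotProduct {n : Type*} [Fintype n] (u v : n → ℝ) :
    ∑ i, (v i - u i) ^ 2 = v ⬝ᵥ v - 2 * (u ⬝ᵥ v) + u ⬝ᵥ u := by
  simp only [dotProduct, Finset.mul_sum, ← Finset.sum_sub_distrib, ← Finset.sum_add_distrib]
  exact Finset.sum_congr rfl fun i _ => by ring

section OrthonormalFinTwo

variable {u w : Fin 2 → ℝ} (hu : u ⬝ᵥ u = 1) (hw : w ⬝ᵥ w = 1) (huw : u ⬝ᵥ w = 0)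
include hu hw huw

theorem Matrix.vecMulVec_add_vecMulVec_eq_one : vecMulVec u u + vecMulVec w w = 1 := by
  simp only [dotProduct, Fin.sum_univ_two] at hu hw huw
  ext i j
  fin_cases i <;> fin_cases j <;> simp [vecMulVec_apply] <;> grind

theorem Matrix.eq_add_of_orthonormal_fin_two (v : Fin 2 → ℝ) :
    v = (u ⬝ᵥ v) • u + (w ⬝ᵥ v) • w := by
  conv_lhs => rw [← one_mulVec v, ← vecMulVec_add_vecMulVec_eq_one hu hw huw]
  simp only [add_mulVec, vecMulVec_mulVec, op_smul_eq_smul]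

theorem Matrix.dotProduct_self_eq_of_orthonormal_fin_two (v : Fin 2 → ℝ) :
    v ⬝ᵥ v = (u ⬝ᵥ v) ^ 2 + (w ⬝ᵥ v) ^ 2 := by
  conv_lhs => rw [eq_add_of_orthonormal_fin_two hu hw huw v]
  simp only [add_dotProduct, dotProduct_add, smul_dotProduct, dotProduct_smul, hu, hw, huw,
    dotProduct_comm w u, smul_eq_mul]
  ring

end OrthonormalFinTwo

theorem Real.sqrt_two_sub_two_mul_le_of_mul_eq {a b p c d : ℝ} (hab : a ^ 2 + b ^ 2 = 1)
    (ha : 0 ≤ a) (hbc : b * c = a * p) (hd : 0 < d) (hdc : d ≤ 2 * c) :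
    √(2 - 2 * a) ≤ 2 * |p| / d := by
  have ha1 : a ≤ 1 := by nlinarith
  have hc : (2 - 2 * a) * c ^ 2 ≤ p ^ 2 := by
    have key : (2 - 2 * a) * c ^ 2 * (1 + a) = 2 * a ^ 2 * p ^ 2 := by
      linear_combination (-2 * c ^ 2) * hab + 2 * (b * c + a * p) * hbc
    have : 2 * a ^ 2 * p ^ 2 ≤ (1 + a) * p ^ 2 := by
      nlinarith [mul_nonneg (mul_nonneg ha (sub_nonneg.2 ha1)) (sq_nonneg p)]
    nlinarith
  rw [Real.sqrt_le_left (by positivity), div_pow, mul_pow, sq_abs, le_div_iff₀ (by positivity)]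
  nlinarith [pow_le_pow_left₀ hd.le hdc 2]

theorem top_eigenvector_close_to_doa_general
    (u uperp v : Fin 2 → ℝ) (P : ℝ) (Sig : Matrix (Fin 2) (Fin 2) ℝ)
    (hu : u ⬝ᵥ u = 1) (huperp : uperp ⬝ᵥ uperp = 1) (horth : u ⬝ᵥ uperp = 0)
    (hpsd : Sig.PosSemidef)
    (hfrob : Real.sqrt (∑ i, ∑ j, |Sig i j| ^ 2) < P / 2)
    (M : Matrix (Fin 2) (Fin 2) ℝ)
    (hMdef : M = P • vecMulVec u u + Sig)
    (hM : M.IsHermitian)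
    (hv : M *ᵥ v = (⨆ i, hM.eigenvalues i) • v)
    (hvnorm : v ⬝ᵥ v = 1) (hsign : 0 ≤ v ⬝ᵥ u) :
    Real.sqrt (∑ i, (v i - u i) ^ 2) ≤
      2 * |uperp ⬝ᵥ Sig *ᵥ u| /
        (P - 2 * Real.sqrt (∑ i, ∑ j, |Sig i j| ^ 2)) := by
  set L := ⨆ i, hM.eigenvalues i
  set a := u ⬝ᵥ v
  set b := uperp ⬝ᵥ v
  set p := uperp ⬝ᵥ Sig *ᵥ u
  set q := uperp ⬝ᵥ Sig *ᵥ uperp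
  have hab : a ^ 2 + b ^ 2 = 1 := by
    rw [← hvnorm, dotProduct_self_eq_of_orthonormal_fin_two hu huperp horth v]
  have hSv : Sig *ᵥ v = a • Sig *ᵥ u + b • Sig *ᵥ uperp := by
    conv_lhs => rw [eq_add_of_orthonormal_fin_two hu huperp horth v]
    rw [mulVec_add, mulVec_smul, mulVec_smul]
  have hproj : b * (L - q) = a * p :=
    calc b * (L - q) = uperp ⬝ᵥ M *ᵥ v - b * q := by
          rw [hv, dotProduct_smul, smul_eq_mul, mul_sub, mul_comm]
      _ = uperp ⬝ᵥ Sig *ᵥ v - b * q := by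
          rw [hMdef, add_mulVec, smul_mulVec, vecMulVec_mulVec, op_smul_eq_smul, dotProduct_add,
            dotProduct_smul, dotProduct_smul, dotProduct_comm uperp u, horth, smul_zero,
            smul_zero, zero_add]
      _ = a * p := by
          rw [hSv, dotProduct_add, dotProduct_smul, dotProduct_smul, smul_eq_mul, smul_eq_mul]
          ring
  have hL : P ≤ 2 * L := by
    have htrace : M.trace = P + Sig.trace := by
      rw [hMdef, trace_add, trace_smul, trace_vecMulVec, hu, smul_eq_mul, mul_one]
    have := hM.trace_le_card_mul_iSup_eigenvalues
    rw [htrace, Fintype.card_fin, Nat.cast_ofNat] at this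
    linarith [hpsd.trace_nonneg]
  have hq : q ≤ √(∑ i, ∑ j, |Sig i j| ^ 2) := by
    simpa only [huperp, mul_one] using dotProduct_mulVec_le_sqrt_sum_sq_mul Sig uperp
  rw [sum_sub_sq_eq_dotProduct, hvnorm, hu, show 1 - 2 * a + 1 = 2 - 2 * a by ring]
  exact Real.sqrt_two_sub_two_mul_le_of_mul_eq hab (by rwa [dotProduct_comm] at hsign) hproj
    (by linarith) (by linarith)

/-- Davis–Kahan-type bound for the spiked model `M = P uuᵀ + Σ`. -/
theorem top_eigenvector_close_to_doa
    (u uperp v : Fin 2 → ℝ) (P : ℝ) (Sig : Matrix (Fin 2) (Fin 2) ℝ)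
    (hu : u ⬝ᵥ u = 1) (huperp : uperp ⬝ᵥ uperp = 1) (horth : u ⬝ᵥ uperp = 0)
    (hP : 0 < P) (hsym : Sigᵀ = Sig) (hpsd : Sig.PosSemidef)
    (hfrob : Real.sqrt (∑ i, ∑ j, |Sig i j| ^ 2) < P / 2)
    (M : Matrix (Fin 2) (Fin 2) ℝ)
    (hMdef : M = P • vecMulVec u u + Sig)
    (hM : M.IsHermitian)
    (hv : M *ᵥ v = (⨆ i, hM.eigenvalues i) • v)
    (hvnorm : v ⬝ᵥ v = 1) (hsign : 0 ≤ v ⬝ᵥ u) :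
    Real.sqrt (∑ i, (v i - u i) ^ 2) ≤
      2 * |uperp ⬝ᵥ Sig *ᵥ u| /
        (P - 2 * Real.sqrt (∑ i, ∑ j, |Sig i j| ^ 2)) :=
  top_eigenvector_close_to_doa_general u uperp v P Sig hu huperp horth hpsd hfrob M hMdef hM hv
    hvnorm hsign
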